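/- In a bicontinuous poset X equipped with the interval topology, the order relation ≤ is a closed subset of X × X. -/

import Mathlib

open Set

/-- `a` is way below `x`. -/
def wayBelow {α : Type*} [Preorder α] (a x : α) : Prop :=
  ∀ S : Set α, S.Nonempty → DirectedOn (· ≤ ·) S → ∀ d, IsLUB S d → x ≤ d →
    ∃ s ∈ S, a ≤ s

/-- A poset is continuous if every element is the supremum of a directed set
of elements way below it. -/
def ContinuousPoset (α : Type*) [Preorder α] : Prop :=
  ∀ x : α, ∃ S : Set α, S ⊆ {a | wayBelow a x} ∧ S.Nonempty ∧
    DirectedOn (· ≤ ·) S ∧ IsLUB S x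

/-- A basis for a continuous poset. -/
def PosetBasis {α : Type*} [Preorder α] (B : Set α) : Prop :=
  ∀ x : α, ∃ S : Set α, S ⊆ B ∩ {a | wayBelow a x} ∧ S.Nonempty ∧
    DirectedOn (· ≤ ·) S ∧ IsLUB S x

/-- Scott open sets: upper sets inaccessible by directed suprema. -/
def ScottOpen {α : Type*} [Preorder α] (U : Set α) : Prop :=
  IsUpperSet U ∧ ∀ S : Set α, S.Nonempty → DirectedOn (· ≤ ·) S → ∀ d, IsLUB S d →
    d ∈ U → (S ∩ U).Nonempty

/-- The Scott topology. -/
def scottTop (α : Type*) [Preorder α] : TopologicalSpace α :=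
  TopologicalSpace.generateFrom {U | ScottOpen U}

/-- A bicontinuous poset. -/
def Bicontinuous (α : Type*) [Preorder α] : Prop :=
  ContinuousPoset α ∧
  (∀ x y : α, wayBelow x y ↔
    ∀ S : Set α, S.Nonempty → DirectedOn (· ≥ ·) S → ∀ i, IsGLB S i → i ≤ x →
      ∃ s ∈ S, s ≤ y) ∧
  (∀ x : α, DirectedOn (· ≥ ·) {y | wayBelow x y} ∧ IsGLB {y | wayBelow x y} x)

/-- The basic open intervals `(a,b) = {x | a ≪ x ≪ b}`. -/
def intervalBasis (α : Type*) [Preorder α] : Set (Set α) :=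
  {s | ∃ a b : α, s = {x | wayBelow a x ∧ wayBelow x b}}

/-- The interval topology, generated by the sets `(a,b)`. -/
def intervalTop (α : Type*) [Preorder α] : TopologicalSpace α :=
  TopologicalSpace.generateFrom (intervalBasis α)

/-- A globally hyperbolic poset: bicontinuous, with compact closed intervals. -/
def GloballyHyperbolic (α : Type*) [PartialOrder α] : Prop :=
  Bicontinuous α ∧ ∀ a b : α, @IsCompact α (intervalTop α) (Set.Icc a b)

/-- The poset of closed intervals `[a,b]`, `a ≤ b`, under reverse inclusion. -/
def IX (α : Type*) [PartialOrder α] := {p : α × α // p.1 ≤ p.2}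

instance IX.instPartialOrder {α : Type*} [PartialOrder α] : PartialOrder (IX α) where
  le x y := x.1.1 ≤ y.1.1 ∧ y.1.2 ≤ x.1.2
  le_refl x := ⟨le_refl _, le_refl _⟩
  le_trans x y z h1 h2 := ⟨h1.1.trans h2.1, h2.2.trans h1.2⟩
  le_antisymm x y h1 h2 :=
    Subtype.ext (Prod.ext_iff.mpr ⟨le_antisymm h1.1 h2.1, le_antisymm h2.2 h1.2⟩)

section Rel

variable {β : Type*}

/-- Directedness with respect to an arbitrary relation. -/
def relDirectedOn (r : β → β → Prop) (S : Set β) : Prop :=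
  ∀ x ∈ S, ∀ y ∈ S, ∃ z ∈ S, r x z ∧ r y z

/-- Least upper bound with respect to an arbitrary relation. -/
def relIsLUB (r : β → β → Prop) (S : Set β) (d : β) : Prop :=
  (∀ s ∈ S, r s d) ∧ ∀ u, (∀ s ∈ S, r s u) → r d u

/-- The way-below relation with respect to an arbitrary relation. -/
def relWayBelow (r : β → β → Prop) (a x : β) : Prop :=
  ∀ S : Set β, S.Nonempty → relDirectedOn r S → ∀ d, relIsLUB r S d → r x d →
    ∃ s ∈ S, r a s

/-- An abstract basis: a transitive relation, interpolative from the `-` direction. -/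
def AbstractBasis (r : β → β → Prop) : Prop :=
  Transitive r ∧ ∀ (F : Finset β) (x : β), (∀ y ∈ F, r y x) →
    ∃ z, (∀ y ∈ F, r y z) ∧ r z x

/-- Interpolation in the `+` direction. -/
def PlusInterpolative (r : β → β → Prop) : Prop :=
  ∀ (F : Finset β) (x : β), (∀ y ∈ F, r x y) → ∃ z, r x z ∧ (∀ y ∈ F, r z y)

/-- An ideal: a nonempty directed lower set. -/
def IsIdeal (r : β → β → Prop) (I : Set β) : Prop :=
  I.Nonempty ∧ (∀ x y, r x y → y ∈ I → x ∈ I) ∧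
    ∀ x ∈ I, ∀ y ∈ I, ∃ z ∈ I, r x z ∧ r y z

/-- The ideal completion: ideals ordered by inclusion. -/
def IdealCompletion (r : β → β → Prop) := {I : Set β // IsIdeal r I}

instance IdealCompletion.instPartialOrder {β : Type*} (r : β → β → Prop) :
    PartialOrder (IdealCompletion r) where
  le I J := I.1 ⊆ J.1
  le_refl I := subset_rfl
  le_trans I J K h1 h2 := Set.Subset.trans h1 h2
  le_antisymm I J h1 h2 := Subtype.ext (Set.Subset.antisymm h1 h2)

end Rel

/-- The order on maximal elements induced by interval endpoints. -/
def maxLe {α : Type*} (left right : α → α) (a b : α) : Prop :=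
  ∃ x, left x = a ∧ right x = b

/-- An interval poset. -/
structure IntervalPoset (α : Type*) [PartialOrder α] where
  left : α → α
  right : α → α
  left_max : ∀ x, IsMax (left x)
  right_max : ∀ x, IsMax (right x)
  glb : ∀ x, IsGLB {left x, right x} x
  glue : ∀ x y, right x = left y →
    ∃ z, IsGLB {x, y} z ∧ left z = left x ∧ right z = right y
  sub_left : ∀ x p, IsMax p → x ≤ p →
    ∃ z, IsGLB {left x, p} z ∧ left z = left x ∧ right z = p
  sub_right : ∀ x p, IsMax p → x ≤ p →
    ∃ z, IsGLB {p, right x} z ∧ left z = p ∧ right z = right x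

/-- An interval domain. -/
structure IntervalDomain (α : Type*) [PartialOrder α] extends IntervalPoset α where
  dcpo : ∀ S : Set α, S.Nonempty → DirectedOn (· ≤ ·) S → ∃ d, IsLUB S d
  cont : ContinuousPoset α
  ax1 : ∀ x p, IsMax p → wayBelow x p →
    (∀ z, IsGLB {left x, p} z → ∃ u, wayBelow z u) ∧
    (∀ z, IsGLB {p, right x} z → ∃ u, wayBelow z u)
  ax2b : ∀ x : α, (∃ u, wayBelow x u) ↔
    (∀ y, left y = left x → y ≤ x →
      relWayBelow (fun u v => u ≤ v ∧ right u = right y ∧ right v = right y) y (right y))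
  ax2c : ∀ x : α, (∃ u, wayBelow x u) ↔
    (∀ y, right y = right x → y ≤ x →
      relWayBelow (fun u v => u ≤ v ∧ left u = left y ∧ left v = left y) y (left y))
  ax3a : ∀ (p : α) (S : Set α), S.Nonempty → S ⊆ {z | left z = p} →
    DirectedOn (· ≤ ·) S → ∀ u, IsLUB S u →
      left u = p ∧ ∀ (q : α) (T : Set α), T.Nonempty → T ⊆ {z | left z = q} →
        DirectedOn (· ≤ ·) T → ∀ v, IsLUB T v → right '' T = right '' S →
          right u = right v
  ax3b : ∀ (q : α) (S : Set α), S.Nonempty → S ⊆ {z | right z = q} →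
    DirectedOn (· ≤ ·) S → ∀ u, IsLUB S u →
      right u = q ∧ ∀ (p : α) (T : Set α), T.Nonempty → T ⊆ {z | right z = p} →
        DirectedOn (· ≤ ·) T → ∀ v, IsLUB T v → left '' T = left '' S →
          left u = left v
  ax4 : ∀ x : α, @IsCompact α (scottTop α) ({y | x ≤ y} ∩ {y | IsMax y})

/-! If `x ≰ y`, continuity gives `a ≪ x` with `a ≰ y`, and since `y` is the infimum of `↟y` there is
`b ≫ y` with `a ≰ b`. Every `u` in an interval `(a, c) ∋ x` and every `v` in an interval `(d, b) ∋ y`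
then satisfy `u ≰ v`, since `a ≤ u ≤ v ≤ b` is impossible. Such intervals exist because `↟x` and `↡y`
are nonempty in a bicontinuous poset. -/

section

variable {α : Type*} [Preorder α]

theorem wayBelow.le {a x : α} (h : wayBelow a x) : a ≤ x := by
  obtain ⟨s, rfl, hs⟩ := h {x} (singleton_nonempty x) (directedOn_singleton x) x isLUB_singleton le_rfl
  exact hs

theorem isOpen_intervalTop_interval (a b : α) :
    @IsOpen α (intervalTop α) {x | wayBelow a x ∧ wayBelow x b} :=
  TopologicalSpace.isOpen_generateFrom_of_mem ⟨a, b, rfl⟩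

theorem ContinuousPoset.exists_wayBelow (hα : ContinuousPoset α) (x : α) : ∃ a, wayBelow a x := by
  obtain ⟨S, hS, ⟨a, ha⟩, -⟩ := hα x
  exact ⟨a, hS ha⟩

theorem ContinuousPoset.exists_wayBelow_not_le (hα : ContinuousPoset α) {x y : α} (hxy : ¬x ≤ y) :
    ∃ a, wayBelow a x ∧ ¬a ≤ y := by
  obtain ⟨S, hS, -, -, hlub⟩ := hα x
  by_contra! hle
  exact hxy (hlub.2 fun a ha ↦ hle a (hS ha))

theorem Bicontinuous.exists_wayAbove_not_le (hα : Bicontinuous α) {a y : α} (hay : ¬a ≤ y) :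
    ∃ b, wayBelow y b ∧ ¬a ≤ b := by
  by_contra! hle
  exact hay ((hα.2.2 y).2.2 hle)

/-- If nothing were way above `x`, then `x = inf ∅` would be a top element, and the dual
characterization of `≪` would give `x ≪ x`. -/
theorem Bicontinuous.exists_wayAbove (hα : Bicontinuous α) (x : α) : ∃ c, wayBelow x c := by
  by_contra! hempty
  have hx_top : ∀ y : α, y ≤ x := fun y ↦ (hα.2.2 x).2.2 fun z hz ↦ (hempty z hz).elim
  exact hempty x <| (hα.2.1 x x).2 fun S ⟨s, hs⟩ _ _ _ _ ↦ ⟨s, hs, hx_top s⟩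

end

/-- in a bicontinuous poset with the interval topology, `≤` is a closed
subset of `X × X`. -/
theorem le_closed {α : Type*} [PartialOrder α] (h : Bicontinuous α) :
    letI : TopologicalSpace α := intervalTop α
    IsClosed {p : α × α | p.1 ≤ p.2} := by
  let : TopologicalSpace α := intervalTop α
  rw [← isOpen_compl_iff, isOpen_prod_iff]
  intro x y hxy
  obtain ⟨a, hax, hay⟩ := h.1.exists_wayBelow_not_le hxy
  obtain ⟨b, hyb, hab⟩ := h.exists_wayAbove_not_le hay
  obtain ⟨c, hxc⟩ := h.exists_wayAbove x
  obtain ⟨d, hdy⟩ := h.1.exists_wayBelow y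
  refine ⟨_, _, isOpen_intervalTop_interval a c, isOpen_intervalTop_interval d b,
    ⟨hax, hxc⟩, ⟨hdy, hyb⟩, ?_⟩
  rintro ⟨u, v⟩ ⟨⟨hau, -⟩, -, hvb⟩ (huv : u ≤ v)
  exact hab (hau.le.trans (huv.trans hvb.le))
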